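/- Let R_1 = [w_1,…,w_s] and R_2 = [w'_1,…,w'_t] be vertex-disjoint induced paths of a finite simple block graph, and let Q = [v_1,…,v_r] be an induced path with v_1 = w_1 and v_r = w'_t. Then there is a unique decomposition Q = Q_1 * γ * Q_2 where Q_1 is a subpath of R_1, Q_2 is a subpath of R_2, and γ ∩ R_1 and γ ∩ R_2 each consist of a single vertex. -/

import Mathlib

open SimpleGraph

/-- An induced path in a simple graph `G`: a walk which is a path and such that the
subgraph of `G` induced on its vertex set equals the path. -/
structure InducedPath {V : Type*} (G : SimpleGraph V) where
  first : V
  last : V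
  walk : G.Walk first last
  isPath : walk.IsPath
  induced : ∀ x ∈ walk.support, ∀ y ∈ walk.support, G.Adj x y → s(x, y) ∈ walk.edges

namespace InducedPath

variable {V : Type*} {G : SimpleGraph V}

/-- The vertex set of an induced path. -/
def vertexSet (P : InducedPath G) : Set V := {v | v ∈ P.walk.support}

/-- The edge set of an induced path. -/
def edgeSet (P : InducedPath G) : Set (Sym2 V) := {e | e ∈ P.walk.edges}

/-- The terminal vertices `∂P` of an induced path. -/
def boundary (P : InducedPath G) : Set V := {P.first, P.last}

/-- The internal vertices `P°` of an induced path. -/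
def interior (P : InducedPath G) : Set V := P.vertexSet \ P.boundary

end InducedPath

section FamilyDefs

variable {V : Type*} (G : SimpleGraph V) {ℓ : ℕ}

/-- `Q` contains `P` as a subgraph. -/
def PathContains (Q P : InducedPath G) : Prop :=
  P.vertexSet ⊆ Q.vertexSet ∧ P.edgeSet ⊆ Q.edgeSet

/-- The vertex set of `P_ind`, the induced subgraph on `⋃ i, V(P i)`. -/
def famVerts (P : Fin ℓ → InducedPath G) : Set V := ⋃ i, (P i).vertexSet

/-- The union of the edge sets of the paths `P i`. -/
def famEdges (P : Fin ℓ → InducedPath G) : Set (Sym2 V) := ⋃ i, (P i).edgeSet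

/-- The paths `P i` are pairwise vertex-disjoint. -/
def PairwiseVertexDisjoint (P : Fin ℓ → InducedPath G) : Prop :=
  ∀ i j : Fin ℓ, i ≠ j → Disjoint (P i).vertexSet (P j).vertexSet

/-- `φ` is an orientation of the induced path `P`, i.e. a surjection `{1,2} → ∂P`. -/
def IsOrientation (P : InducedPath G) (φ : Fin 2 → V) : Prop :=
  Set.range φ = P.boundary

/-- `Q` is an induced path of `P_ind` (equivalently, an induced path of `G` all of whose
vertices belong to `⋃ i, V(P i)`). -/
def IsPathOfInd (P : Fin ℓ → InducedPath G) (Q : InducedPath G) : Prop :=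
  Q.vertexSet ⊆ famVerts G P

/-- The data `(P, σ, φ)` is DOIP. -/
def IsDOIPData (P : Fin ℓ → InducedPath G) (σ : Equiv.Perm (Fin ℓ))
    (φ : Fin ℓ → Fin 2 → V) : Prop :=
  (∀ i, IsOrientation G (P i) (φ i)) ∧
    ∀ i j : Fin ℓ, σ i ≤ σ j → ∀ Q : InducedPath G, IsPathOfInd G P Q →
      ({Q.first, Q.last} : Set V) = {φ (σ i) 0, φ (σ j) 1} →
      ∃ k, PathContains G Q (P k)

/-- The family `P` is DOIP: there exist `σ` and orientations making it DOIP. -/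
def FamilyDOIP (P : Fin ℓ → InducedPath G) : Prop :=
  ∃ (σ : Equiv.Perm (Fin ℓ)) (φ : Fin ℓ → Fin 2 → V), IsDOIPData G P σ φ

/-- `Q` realizes an arc `(i,j)` of the directed multigraph `K_{P_ind}`. -/
def KArcWitness (P : Fin ℓ → InducedPath G) (φ : Fin ℓ → Fin 2 → V) (i j : Fin ℓ)
    (Q : InducedPath G) : Prop :=
  IsPathOfInd G P Q ∧ ({Q.first, Q.last} : Set V) = {φ i 0, φ j 1} ∧
    ∀ k, ¬ PathContains G Q (P k)

/-- `(i,j)` is an arc of `K_{P_ind}`. -/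
def KArc (P : Fin ℓ → InducedPath G) (φ : Fin ℓ → Fin 2 → V) (i j : Fin ℓ) : Prop :=
  ∃ Q : InducedPath G, KArcWitness G P φ i j Q

/-- The directed multigraph `K_{P_ind}` is directed acyclic (no loops and no directed
cycles). -/
def KAcyclic (P : Fin ℓ → InducedPath G) (φ : Fin ℓ → Fin 2 → V) : Prop :=
  ∀ i : Fin ℓ, ¬ Relation.TransGen (KArc G P φ) i i

/-- `Q` is a strand of `P_ind` from `P i` to `P j`. -/
def IsStrand (P : Fin ℓ → InducedPath G) (φ : Fin ℓ → Fin 2 → V) (i j : Fin ℓ)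
    (Q : InducedPath G) : Prop :=
  i ≠ j ∧ IsPathOfInd G P Q ∧ Q.first ≠ φ i 1 ∧ Q.last ≠ φ j 0 ∧
    Q.vertexSet ∩ (P i).vertexSet = {Q.first} ∧
    Q.vertexSet ∩ (P j).vertexSet = {Q.last} ∧
    ∀ k, ¬ PathContains G Q (P k)

/-- `Q` is an internal strand of `P_ind` from `P i` to `P j`. -/
def IsInternalStrand (P : Fin ℓ → InducedPath G) (i j : Fin ℓ) (Q : InducedPath G) : Prop :=
  i ≠ j ∧ IsPathOfInd G P Q ∧
    Q.first ∈ (P i).interior ∧ Q.last ∈ (P j).interior ∧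
    Q.vertexSet ∩ (P i).vertexSet = {Q.first} ∧
    Q.vertexSet ∩ (P j).vertexSet = {Q.last} ∧
    ∀ k, ¬ PathContains G Q (P k)

/-- `(Q, b, c)` is an internal fork of `P_ind` from `P i` to `P j`. -/
def IsInternalFork (P : Fin ℓ → InducedPath G) (i j : Fin ℓ) (Q : InducedPath G)
    (b c : V) : Prop :=
  i ≠ j ∧ IsPathOfInd G P Q ∧ Q.first ∈ (P i).interior ∧
    Q.vertexSet ∩ (P i).vertexSet = {Q.first} ∧
    Q.vertexSet ∩ (P j).vertexSet = ∅ ∧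
    b ∈ (P j).vertexSet ∧ c ∈ (P j).vertexSet ∧ b ≠ c ∧
    G.Adj Q.last b ∧ G.Adj Q.last c ∧
    ∀ k, ¬ PathContains G Q (P k)

/-- `(Q, a, b, c, d)` is a double fork of `P_ind` from `P i` to `P j`. -/
def IsDoubleFork (P : Fin ℓ → InducedPath G) (i j : Fin ℓ) (Q : InducedPath G)
    (a b c d : V) : Prop :=
  i ≠ j ∧ IsPathOfInd G P Q ∧
    Q.vertexSet ∩ (P i).vertexSet = ∅ ∧
    Q.vertexSet ∩ (P j).vertexSet = ∅ ∧
    a ∈ (P i).vertexSet ∧ b ∈ (P i).vertexSet ∧ a ≠ b ∧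
    c ∈ (P j).vertexSet ∧ d ∈ (P j).vertexSet ∧ c ≠ d ∧
    G.Adj Q.first a ∧ G.Adj Q.first b ∧ G.Adj Q.last c ∧ G.Adj Q.last d ∧
    ∀ k, ¬ PathContains G Q (P k)

/-- `(a, b, c, d)` is a complete ladder of `P_ind` between `P i` and `P j`. -/
def IsCompleteLadder (P : Fin ℓ → InducedPath G) (i j : Fin ℓ) (a b c d : V) : Prop :=
  i ≠ j ∧ a ∈ (P i).vertexSet ∧ b ∈ (P i).vertexSet ∧ a ≠ b ∧
    c ∈ (P j).vertexSet ∧ d ∈ (P j).vertexSet ∧ c ≠ d ∧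
    G.Adj a b ∧ G.Adj a c ∧ G.Adj a d ∧ G.Adj b c ∧ G.Adj b d ∧ G.Adj c d

/-- `P_ind` contains an internal strand, an internal fork, a double fork, or a
complete ladder. -/
def HasForbidden (P : Fin ℓ → InducedPath G) : Prop :=
  (∃ i j Q, IsInternalStrand G P i j Q) ∨
  (∃ i j Q b c, IsInternalFork G P i j Q b c) ∨
  (∃ i j Q a b c d, IsDoubleFork G P i j Q a b c d) ∨
  (∃ i j a b c d, IsCompleteLadder G P i j a b c d)

/-- `P_ind` contains a complete ladder, or an internal strand, internal fork, or double
fork which is edge-disjoint from the family `P`. -/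
def HasForbiddenEdgeDisjoint (P : Fin ℓ → InducedPath G) : Prop :=
  (∃ i j Q, IsInternalStrand G P i j Q ∧ Disjoint Q.edgeSet (famEdges G P)) ∨
  (∃ i j Q b c, IsInternalFork G P i j Q b c ∧
    Disjoint (Q.edgeSet ∪ {s(Q.last, b), s(Q.last, c)}) (famEdges G P)) ∨
  (∃ i j Q a b c d, IsDoubleFork G P i j Q a b c d ∧
    Disjoint (Q.edgeSet ∪ {s(Q.first, a), s(Q.first, b), s(Q.last, c), s(Q.last, d)})
      (famEdges G P)) ∨
  (∃ i j a b c d, IsCompleteLadder G P i j a b c d)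

end FamilyDefs

section Invariants

variable {V : Type*}

/-- The invariant `ν(G)`: the maximal total number of edges of a family of
vertex-disjoint induced paths of `G` which is DOIP. -/
noncomputable def nu (G : SimpleGraph V) : ℕ :=
  sSup {n : ℕ | ∃ (ℓ : ℕ) (P : Fin ℓ → InducedPath G),
    PairwiseVertexDisjoint G P ∧ FamilyDOIP G P ∧ n = ∑ i, (P i).walk.length}

/-- `ℓ(G)`: the number of edges of a longest induced path of `G`. -/
noncomputable def longestInducedPathLength (G : SimpleGraph V) : ℕ :=
  sSup {n : ℕ | ∃ P : InducedPath G, n = P.walk.length}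

end Invariants

section BlockGraphs

variable {V : Type*} {G : SimpleGraph V}

/-- A subgraph is biconnected if it is connected and remains connected after
deleting any single vertex. -/
def SubgraphBiconnected (H : G.Subgraph) : Prop :=
  H.coe.Connected ∧ ∀ v : V, ((H.deleteVerts {v}).coe).Connected

/-- A block of `G` is a maximal biconnected subgraph. -/
def IsBlock (H : G.Subgraph) : Prop :=
  SubgraphBiconnected H ∧ ∀ H' : G.Subgraph, SubgraphBiconnected H' → H ≤ H' → H' = H

/-- `G` is a block graph if every block of `G` is a complete graph. -/
def IsBlockGraph (G : SimpleGraph V) : Prop :=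
  ∀ H : G.Subgraph, IsBlock H → ∀ a ∈ H.verts, ∀ b ∈ H.verts, a ≠ b → H.Adj a b

/-- The intersection `Q ∩ R` of two induced paths, as a subgraph of `G`. -/
def pathsInter (Q R : InducedPath G) : G.Subgraph where
  verts := Q.vertexSet ∩ R.vertexSet
  Adj a b := G.Adj a b ∧ s(a, b) ∈ Q.walk.edges ∧ s(a, b) ∈ R.walk.edges
  adj_sub h := h.1
  edge_vert h := ⟨Q.walk.fst_mem_support_of_mem_edges h.2.1,
    R.walk.fst_mem_support_of_mem_edges h.2.2⟩
  symm := by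
    constructor
    intro a b h
    refine ⟨h.1.symm, ?_, ?_⟩
    · rw [Sym2.eq_swap]; exact h.2.1
    · rw [Sym2.eq_swap]; exact h.2.2

/-- `s` is a maximal clique of `G`. -/
def IsMaxClique (G : SimpleGraph V) (s : Set V) : Prop :=
  G.IsClique s ∧ ∀ t : Set V, G.IsClique t → s ⊆ t → s = t

/-- `G` has the two-block property: every vertex belongs to at most two maximal
cliques. -/
def TwoBlockProperty (G : SimpleGraph V) : Prop :=
  ∀ v : V, ({s : Set V | IsMaxClique G s ∧ v ∈ s}).ncard ≤ 2

/-- The completion `G_c` of `G` at the vertex `c`. -/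
def completionAt (G : SimpleGraph V) (c : V) : SimpleGraph V where
  Adj u w := G.Adj u w ∨ (u ≠ w ∧ G.Adj c u ∧ G.Adj c w)
  symm := by
    constructor
    intro u w h
    rcases h with h | ⟨hne, h1, h2⟩
    · exact Or.inl h.symm
    · exact Or.inr ⟨hne.symm, h2, h1⟩
  loopless := by
    constructor
    intro u h
    rcases h with h | ⟨hne, _, _⟩
    · exact G.irrefl h
    · exact hne rfl

/-- The number of connected components of a graph. -/
noncomputable def numComponents (G : SimpleGraph V) : ℕ :=
  Nat.card G.ConnectedComponent

/-- `c` is a cut vertex of `G`: deleting it strictly increases the number of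
connected components. -/
def IsCutVertex (G : SimpleGraph V) (c : V) : Prop :=
  numComponents G < numComponents (G.induce ({c}ᶜ : Set V))

end BlockGraphs

/-!
In a block graph every cycle is biconnected, so it lies in a block and its vertices are pairwise
adjacent. Hence two different chordless paths with the same ends cannot exist: they would contain
a cycle made of a subpath of each, one of length at least two, whose vertices at distance two would
be joined by a chord.

Cut `Q` at its last vertex `c` on `R₁`. The part of `Q` before `c` and the segment of `R₁` from
`Q.first` to `c` are chordless paths with the same ends, so they coincide. Cutting the rest of `Q`
at its first vertex `d` on `R₂` gives `Q₂` and `γ` in the same way. Conversely, in any such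
decomposition `c` must be the last vertex of `Q` on `R₁` (as `R₁` and `R₂` are disjoint) and `d`
the first vertex after it on `R₂`, which gives uniqueness.
-/

namespace SimpleGraph

variable {V : Type*} {G : SimpleGraph V} {u v w : V}

lemma Subgraph.deleteVerts_singleton_of_notMem {H : G.Subgraph} (hv : v ∉ H.verts) :
    H.deleteVerts {v} = H := by
  rw [← deleteVerts_inter_verts_left_eq, Set.inter_singleton_eq_empty.mpr hv, deleteVerts_empty]

namespace Walk

lemma IsPath.eq_of_mem_support_append {p : G.Walk u v} {q : G.Walk v w}
    (hpq : (p.append q).IsPath) {x : V} (hxp : x ∈ p.support) (hxq : x ∈ q.support) :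
    x = v := by
  have hnd := hpq.support_nodup
  rw [support_append, List.nodup_append] at hnd
  rw [← cons_tail_support q, List.mem_cons] at hxq
  exact hxq.resolve_right fun hx => hnd.2.2 x hxp x hx rfl

lemma IsPath.not_adj_getVert_two {p : G.Walk u v} (hp : p.IsPath) (hc : p.IsChordless)
    (hlen : 2 ≤ p.length) : ¬ G.Adj u (p.getVert 2) := by
  intro hadj
  have he := hc.mem_edges p.start_mem_support (p.getVert_mem_support 2) hadj
  rw [← mem_edges_toSubgraph, Subgraph.mem_edgeSet] at he
  have h12 := hp.getVert_injOn (by simp; omega) (by simp; omega) (hp.snd_of_toSubgraph_adj he)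
  omega

lemma IsChordless.reverse {p : G.Walk u v} (hp : p.IsChordless) : p.reverse.IsChordless := by
  rw [isChordless_iff_forall_mem_edges, support_reverse, edges_reverse]
  simp only [List.mem_reverse]
  exact fun _ _ hx hy hxy => hp.mem_edges hx hy hxy

lemma IsChordless.of_append_left {p : G.Walk u v} {q : G.Walk v w} (hpq : (p.append q).IsPath)
    (h : (p.append q).IsChordless) : p.IsChordless := by
  rw [isChordless_iff_forall_mem_edges]
  intro x y hx hy hxy
  have he := h.mem_edges (p.support_subset_support_append_left q hx)
    (p.support_subset_support_append_left q hy) hxy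
  rw [edges_append, List.mem_append] at he
  refine he.resolve_right fun he => hxy.ne ?_
  rw [hpq.eq_of_mem_support_append hx (q.fst_mem_support_of_mem_edges he),
    hpq.eq_of_mem_support_append hy (q.snd_mem_support_of_mem_edges he)]

lemma IsChordless.of_append_right {p : G.Walk u v} {q : G.Walk v w} (hpq : (p.append q).IsPath)
    (h : (p.append q).IsChordless) : q.IsChordless := by
  rw [← reverse_reverse q]
  rw [← isPath_reverse_iff, reverse_append] at hpq
  exact (IsChordless.of_append_left hpq (reverse_append p q ▸ h.reverse)).reverse

lemma IsChordless.of_isSubwalk {u' v' : V} {p : G.Walk u v} {q : G.Walk u' v'}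
    (hqp : q.IsSubwalk p) (hp : p.IsPath) (h : p.IsChordless) : q.IsChordless := by
  obtain ⟨r, s, rfl⟩ := hqp
  exact (h.of_append_left hp).of_append_right hp.of_append_left

lemma IsChordless.edges_subset_of_support_subset {u' v' : V} {r : G.Walk u v}
    {q : G.Walk u' v'} (hr : r.IsChordless) (h : q.support ⊆ r.support) :
    q.edges ⊆ r.edges := by
  intro e he
  induction e using Sym2.ind with
  | _ x y =>
    exact hr.mem_edges (h (q.fst_mem_support_of_mem_edges he))
      (h (q.snd_mem_support_of_mem_edges he)) (q.adj_of_mem_edges he)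

lemma IsPath.exists_isPath_isChordless_of_mem_support {r : G.Walk u v} (hr : r.IsPath)
    (hrc : r.IsChordless) {a b : V} (ha : a ∈ r.support) (hb : b ∈ r.support) :
    ∃ E : G.Walk a b, E.IsPath ∧ E.IsChordless ∧ E.support ⊆ r.support := by
  classical
  by_cases hbd : b ∈ (r.dropUntil a ha).support
  · have hE := (isSubwalk_takeUntil _ hbd).trans (isSubwalk_dropUntil r ha)
    exact ⟨_, isPath_of_isSubwalk hE hr, hrc.of_isSubwalk hE hr, hE.support_subset⟩
  · have hbt : b ∈ (r.takeUntil a ha).support := by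
      rw [← r.take_spec ha, mem_support_append_iff] at hb
      exact hb.resolve_right hbd
    have hE := (isSubwalk_dropUntil _ hbt).trans (isSubwalk_takeUntil r ha)
    refine ⟨_, (isPath_of_isSubwalk hE hr).reverse, (hrc.of_isSubwalk hE hr).reverse, ?_⟩
    rw [support_reverse]
    exact fun x hx => hE.support_subset (List.mem_reverse.mp hx)

lemma exists_eq_append_of_inter_eq {S : Set V} (q : G.Walk u w) (hw : w ∈ S) :
    ∃ (c : V) (q₁ : G.Walk u c) (q₂ : G.Walk c w),
      q = q₁.append q₂ ∧ {x | x ∈ q₁.support} ∩ S = {c} := by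
  induction q with
  | nil => exact ⟨_, nil, nil, rfl, by ext; simp +contextual [hw]⟩
  | @cons u' _ _ hadj q ih =>
    by_cases hu : u' ∈ S
    · exact ⟨u', nil, cons hadj q, rfl, by ext; simp +contextual [hu]⟩
    · obtain ⟨c, q₁, q₂, rfl, hq₁⟩ := ih hw
      refine ⟨c, cons hadj q₁, q₂, rfl, ?_⟩
      rw [Set.ext_iff] at hq₁ ⊢
      intro x
      rw [← hq₁]
      simp only [Set.mem_inter_iff, Set.mem_ofPred_eq, support_cons, List.mem_cons]
      grind

lemma mem_support_of_append_eq_append_of_length_le {c c' : V}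
    {p₁ : G.Walk u c} {p₂ : G.Walk c w} {p₁' : G.Walk u c'} {p₂' : G.Walk c' w}
    (h : p₁.append p₂ = p₁'.append p₂') (hle : p₁.length ≤ p₁'.length) : c ∈ p₁'.support := by
  have hc := congrArg (·.getVert p₁.length) h
  simp only [getVert_append', le_refl, if_true, getVert_length, hle] at hc
  exact hc ▸ p₁'.getVert_mem_support _

lemma append_inj {c : V} {p₁ p₁' : G.Walk u c} {p₂ p₂' : G.Walk c w}
    (h : p₁.append p₂ = p₁'.append p₂') (hlen : p₁.length = p₁'.length) :
    p₁ = p₁' ∧ p₂ = p₂' := by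
  have hs := congrArg support h
  rw [support_append, support_append] at hs
  obtain ⟨h₁, h₂⟩ := List.append_inj hs (by simp [length_support, hlen])
  refine ⟨ext_support h₁, ext_support ?_⟩
  rw [← cons_tail_support p₂, ← cons_tail_support p₂', h₂]

lemma IsPath.eq_of_append_eq_append_of_inter_eq {S : Set V} {p : G.Walk u w} (hp : p.IsPath)
    {c c' : V} {p₁ : G.Walk u c} {p₂ : G.Walk c w} {p₁' : G.Walk u c'} {p₂' : G.Walk c' w}
    (h : p = p₁.append p₂) (h' : p = p₁'.append p₂')
    (hS : {x | x ∈ p₁.support} ∩ S = {c}) (hS' : {x | x ∈ p₁'.support} ∩ S = {c'}) :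
    c = c' ∧ HEq p₁ p₁' ∧ HEq p₂ p₂' := by
  obtain rfl : c = c' := by
    rcases le_total p₁.length p₁'.length with hle | hle
    · refine (Set.eq_singleton_iff_unique_mem.mp hS').2 c
        ⟨mem_support_of_append_eq_append_of_length_le (h.symm.trans h') hle, ?_⟩
      exact (Set.eq_singleton_iff_unique_mem.mp hS).1.2
    · refine ((Set.eq_singleton_iff_unique_mem.mp hS).2 c'
        ⟨mem_support_of_append_eq_append_of_length_le (h'.symm.trans h) hle, ?_⟩).symm
      exact (Set.eq_singleton_iff_unique_mem.mp hS').1.2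
  have hget : ∀ {p₁ : G.Walk u c} {p₂ : G.Walk c w}, p = p₁.append p₂ →
      p.getVert p₁.length = c := by
    rintro p₁ p₂ rfl
    simp [getVert_append']
  have hlen : p₁.length = p₁'.length :=
    hp.getVert_injOn (by simp [h]) (by simp [h']) ((hget h).trans (hget h').symm)
  obtain ⟨rfl, rfl⟩ := append_inj (h.symm.trans h') hlen
  exact ⟨rfl, .rfl, .rfl⟩

lemma IsPath.eq_of_append_append_eq_append_append {S₁ S₂ : Set V}
    (hS : Disjoint S₁ S₂) {q : G.Walk u w} (hq : q.IsPath) {c d c' d' : V}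
    {q₁ : G.Walk u c} {g : G.Walk c d} {q₂ : G.Walk d w}
    {q₁' : G.Walk u c'} {g' : G.Walk c' d'} {q₂' : G.Walk d' w}
    (h : q = q₁.append (g.append q₂)) (h' : q = q₁'.append (g'.append q₂'))
    (hq₂ : {x | x ∈ q₂.support} ⊆ S₂) (hg₁ : {x | x ∈ g.support} ∩ S₁ = {c})
    (hg₂ : {x | x ∈ g.support} ∩ S₂ = {d})
    (hq₂' : {x | x ∈ q₂'.support} ⊆ S₂) (hg₁' : {x | x ∈ g'.support} ∩ S₁ = {c'})
    (hg₂' : {x | x ∈ g'.support} ∩ S₂ = {d'}) :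
    c' = c ∧ d' = d ∧ HEq q₁' q₁ ∧ HEq g' g ∧ HEq q₂' q₂ := by
  have hrev : ∀ {c d : V} {g : G.Walk c d} {q₂ : G.Walk d w},
      {x | x ∈ q₂.support} ⊆ S₂ → {x | x ∈ g.support} ∩ S₁ = {c} →
      {x | x ∈ (g.append q₂).reverse.support} ∩ S₁ = {c} := by
    intro c d g q₂ hq₂ hg₁
    rw [← hg₁]
    ext x
    simp only [support_reverse, List.mem_reverse, mem_support_append_iff, Set.mem_inter_iff,
      Set.mem_ofPred_eq]
    refine ⟨fun ⟨hx, hx₁⟩ => ⟨hx.resolve_right fun hx₂ => ?_, hx₁⟩,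
      fun ⟨hx, hx₁⟩ => ⟨Or.inl hx, hx₁⟩⟩
    exact hS.notMem_of_mem_left hx₁ (hq₂ hx₂)
  obtain ⟨rfl, hrest, hq₁⟩ := hq.reverse.eq_of_append_eq_append_of_inter_eq
    (by rw [h', reverse_append]) (by rw [h, reverse_append]) (hrev hq₂' hg₁') (hrev hq₂ hg₁)
  obtain rfl := reverse_injective (eq_of_heq hq₁)
  obtain ⟨rfl, hg, hq₂⟩ := (h' ▸ hq).of_append_right.eq_of_append_eq_append_of_inter_eq
    rfl (reverse_injective (eq_of_heq hrest)) hg₂' hg₂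
  exact ⟨rfl, rfl, .rfl, hg, hq₂⟩

lemma IsPath.connected_toSubgraph_deleteVerts_start {p : G.Walk u v} (hp : p.IsPath)
    (hne : ¬ p.Nil) : (p.toSubgraph.deleteVerts {u}).Connected := by
  cases p with
  | nil => exact absurd Nil.nil hne
  | cons hadj q =>
    have hu : u ∉ q.toSubgraph.verts := by
      simpa using ((cons_isPath_iff hadj q).mp hp).2
    refine q.toSubgraph_connected.mono ?_ ?_
    · rw [← Subgraph.deleteVerts_singleton_of_notMem hu]
      exact Subgraph.deleteVerts_mono le_sup_right
    · ext x
      simp only [verts_toSubgraph, Subgraph.deleteVerts_verts, support_cons] at hu ⊢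
      grind

lemma IsCycle.connected_toSubgraph_deleteVerts {c : G.Walk u u} (hc : c.IsCycle) (v : V) :
    (c.toSubgraph.deleteVerts {v}).Connected := by
  classical
  by_cases hv : v ∈ c.support
  · have hc' := hc.rotate hv
    rw [← toSubgraph_rotate c hv]
    generalize c.rotate v hv = c' at hc' ⊢
    cases c' with
    | nil => exact absurd hc' not_isCycle_nil
    | cons hadj p =>
      have hp := ((cons_isCycle_iff p hadj).mp hc').1
      have hne : ¬ p.reverse.Nil := by
        rw [nil_reverse]
        exact fun h => hadj.ne h.eq.symm
      have hconn := hp.reverse.connected_toSubgraph_deleteVerts_start hne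
      rw [toSubgraph_reverse] at hconn
      refine hconn.mono (Subgraph.deleteVerts_mono le_sup_right) ?_
      have hvp := p.end_mem_support
      ext x
      simp only [verts_toSubgraph, Subgraph.deleteVerts_verts, support_cons]
      grind
  · rw [Subgraph.deleteVerts_singleton_of_notMem (by simpa)]
    exact c.toSubgraph_connected

lemma IsCycle.subgraphBiconnected {c : G.Walk u u} (hc : c.IsCycle) :
    SubgraphBiconnected c.toSubgraph :=
  ⟨c.toSubgraph_connected.coe, fun v => (hc.connected_toSubgraph_deleteVerts v).coe⟩

end Walk

end SimpleGraph

section BlockGraph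

open SimpleGraph.Walk

variable {V : Type*} {G : SimpleGraph V} {u v w : V}

lemma SubgraphBiconnected.exists_isBlock_le [Finite V] {H : G.Subgraph}
    (hH : SubgraphBiconnected H) : ∃ B : G.Subgraph, IsBlock B ∧ H ≤ B := by
  obtain ⟨B, hHB, hB, hmax⟩ := Finite.exists_le_maximal hH
  exact ⟨B, ⟨hB, fun H' hH' hBH' => le_antisymm (hmax hH' hBH') hBH'⟩, hHB⟩

lemma IsBlockGraph.adj_of_isCycle [Finite V] (hBG : IsBlockGraph G) {c : G.Walk u u}
    (hc : c.IsCycle) {x y : V} (hx : x ∈ c.support) (hy : y ∈ c.support) (hxy : x ≠ y) :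
    G.Adj x y := by
  obtain ⟨B, hB, hcB⟩ := hc.subgraphBiconnected.exists_isBlock_le
  exact (hBG B hB x (hcB.1 (c.mem_verts_toSubgraph.2 hx)) y
    (hcB.1 (c.mem_verts_toSubgraph.2 hy)) hxy).adj_sub

lemma IsBlockGraph.eq_of_isChordless [Finite V] (hBG : IsBlockGraph G) {p q : G.Walk u v}
    (hp : p.IsPath) (hpc : p.IsChordless) (hq : q.IsPath) (hqc : q.IsChordless) : p = q := by
  by_contra hne
  obtain ⟨u', v', p', q', hp', hq', hcyc⟩ := hp.exists_isCycle_of_ne hq hne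
  have chord : ∀ {r : G.Walk u' v'}, r.IsPath → r.IsChordless → 2 ≤ r.length →
      r.support ⊆ (p'.append q'.reverse).support → False := by
    intro r hr hrc hlen hsub
    have hne : u' ≠ r.getVert 2 := fun h => by
      have := hr.getVert_injOn (by simp) (by simpa using hlen) (r.getVert_zero.trans h)
      omega
    exact hr.not_adj_getVert_two hrc hlen
      (hBG.adj_of_isCycle hcyc (hsub r.start_mem_support) (hsub (r.getVert_mem_support 2)) hne)
  have hlen := hcyc.three_le_length
  rw [length_append, length_reverse] at hlen
  rcases (by omega : 2 ≤ p'.length ∨ 2 ≤ q'.length) with h | h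
  · exact chord (isPath_of_isSubwalk hp' hp) (hpc.of_isSubwalk hp' hp) h
      (support_subset_support_append_left _ _)
  · refine chord (isPath_of_isSubwalk hq' hq) (hqc.of_isSubwalk hq' hq) h fun x hx => ?_
    rw [mem_support_append_iff, support_reverse, List.mem_reverse]
    exact Or.inr hx

lemma IsBlockGraph.exists_eq_append_support_subset [Finite V] (hBG : IsBlockGraph G)
    {q : G.Walk u w} (hq : q.IsPath) (hqc : q.IsChordless) {a b : V} {r : G.Walk a b}
    (hr : r.IsPath) (hrc : r.IsChordless) (hu : u ∈ r.support) :
    ∃ (c : V) (q₁ : G.Walk u c) (q₂ : G.Walk c w), q = q₁.append q₂ ∧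
      q₁.support ⊆ r.support ∧ {x | x ∈ q₂.support} ∩ {x | x ∈ r.support} = {c} := by
  obtain ⟨c, s₁, s₂, hsplit, hs₁⟩ :=
    q.reverse.exists_eq_append_of_inter_eq (S := {x | x ∈ r.support}) hu
  have hq' : q = s₂.reverse.append s₁.reverse := by
    rw [← reverse_append, ← hsplit, reverse_reverse]
  have hcr : c ∈ r.support := (Set.eq_singleton_iff_unique_mem.mp hs₁).1.2
  obtain ⟨E, hE, hEc, hEr⟩ := hr.exists_isPath_isChordless_of_mem_support hrc hu hcr
  rw [hq'] at hq hqc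
  have hq₁ : s₂.reverse = E :=
    hBG.eq_of_isChordless hq.of_append_left (hqc.of_append_left hq) hE hEc
  refine ⟨c, s₂.reverse, s₁.reverse, hq', hq₁ ▸ hEr, ?_⟩
  simpa only [support_reverse, List.mem_reverse] using hs₁

lemma IsBlockGraph.exists_decomposition [Finite V] (hBG : IsBlockGraph G)
    {q : G.Walk u w} (hq : q.IsPath) (hqc : q.IsChordless)
    {a₁ b₁ a₂ b₂ : V} {r₁ : G.Walk a₁ b₁} {r₂ : G.Walk a₂ b₂}
    (hr₁ : r₁.IsPath) (hr₁c : r₁.IsChordless) (hr₂ : r₂.IsPath) (hr₂c : r₂.IsChordless)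
    (hu : u ∈ r₁.support) (hw : w ∈ r₂.support) :
    ∃ (c d : V) (q₁ : G.Walk u c) (g : G.Walk c d) (q₂ : G.Walk d w),
      q = q₁.append (g.append q₂) ∧
      q₁.support ⊆ r₁.support ∧ q₂.support ⊆ r₂.support ∧
      {x | x ∈ g.support} ∩ {x | x ∈ r₁.support} = {c} ∧
      {x | x ∈ g.support} ∩ {x | x ∈ r₂.support} = {d} := by
  obtain ⟨c, q₁, q', rfl, hq₁, hq'⟩ :=
    hBG.exists_eq_append_support_subset hq hqc hr₁ hr₁c hu
  obtain ⟨d, s₂, s₁, hsplit, hs₂, hs₁⟩ := hBG.exists_eq_append_support_subset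
    hq.of_append_right.reverse (hqc.of_append_right hq).reverse hr₂ hr₂c hw
  have hq'split : q' = s₁.reverse.append s₂.reverse := by
    rw [← reverse_append, ← hsplit, reverse_reverse]
  refine ⟨c, d, q₁, s₁.reverse, s₂.reverse, by rw [hq'split], hq₁, ?_, ?_, ?_⟩
  · rw [support_reverse]
    exact fun x hx => hs₂ (List.mem_reverse.mp hx)
  · refine Set.eq_singleton_iff_unique_mem.mpr
      ⟨⟨start_mem_support _, (Set.eq_singleton_iff_unique_mem.mp hq').1.2⟩, fun x hx => ?_⟩
    refine (Set.eq_singleton_iff_unique_mem.mp hq').2 x ⟨?_, hx.2⟩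
    rw [hq'split]
    exact support_subset_support_append_left _ _ hx.1
  · simpa only [support_reverse, List.mem_reverse] using hs₁

end BlockGraph

lemma InducedPath.isChordless {V : Type*} {G : SimpleGraph V} (P : InducedPath G) :
    P.walk.IsChordless :=
  Walk.isChordless_iff_forall_mem_edges.mpr fun x y hx hy => P.induced x hx y hy

theorem blockGraph_inducedPath_between_two_paths_decomposition_general {V : Type*} [Fintype V]
    {G : SimpleGraph V} (hBG : IsBlockGraph G)
    (R1 R2 Q : InducedPath G) (hdisj : Disjoint R1.vertexSet R2.vertexSet)
    (hfirst : Q.first = R1.first) (hlast : Q.last = R2.last) :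
    ∃ (c d : V) (q1 : G.Walk Q.first c) (g : G.Walk c d) (q2 : G.Walk d Q.last),
      Q.walk = q1.append (g.append q2) ∧
      {v : V | v ∈ q1.support} ⊆ R1.vertexSet ∧
      {e : Sym2 V | e ∈ q1.edges} ⊆ R1.edgeSet ∧
      {v : V | v ∈ q2.support} ⊆ R2.vertexSet ∧
      {e : Sym2 V | e ∈ q2.edges} ⊆ R2.edgeSet ∧
      {v : V | v ∈ g.support} ∩ R1.vertexSet = {c} ∧
      {v : V | v ∈ g.support} ∩ R2.vertexSet = {d} ∧
      ∀ (c₂ d₂ : V) (q1₂ : G.Walk Q.first c₂) (g₂ : G.Walk c₂ d₂) (q2₂ : G.Walk d₂ Q.last),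
        Q.walk = q1₂.append (g₂.append q2₂) →
        {v : V | v ∈ q1₂.support} ⊆ R1.vertexSet →
        {e : Sym2 V | e ∈ q1₂.edges} ⊆ R1.edgeSet →
        {v : V | v ∈ q2₂.support} ⊆ R2.vertexSet →
        {e : Sym2 V | e ∈ q2₂.edges} ⊆ R2.edgeSet →
        {v : V | v ∈ g₂.support} ∩ R1.vertexSet = {c₂} →
        {v : V | v ∈ g₂.support} ∩ R2.vertexSet = {d₂} →
        c₂ = c ∧ d₂ = d ∧ HEq q1₂ q1 ∧ HEq g₂ g ∧ HEq q2₂ q2 := by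
  obtain ⟨c, d, q1, g, q2, hQ, hq1, hq2, hg1, hg2⟩ := hBG.exists_decomposition Q.isPath
    Q.isChordless R1.isPath R1.isChordless R2.isPath R2.isChordless
    (by rw [hfirst]; exact R1.walk.start_mem_support) (by rw [hlast]; exact R2.walk.end_mem_support)
  refine ⟨c, d, q1, g, q2, hQ, hq1, R1.isChordless.edges_subset_of_support_subset hq1, hq2,
    R2.isChordless.edges_subset_of_support_subset hq2, hg1, hg2, ?_⟩
  intro c₂ d₂ q1₂ g₂ q2₂ hQ₂ _ _ hq2₂ _ hg1₂ hg2₂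
  exact Q.isPath.eq_of_append_append_eq_append_append hdisj hQ hQ₂ hq2 hg1 hg2
    hq2₂ hg1₂ hg2₂

/-- **Theorem (Statement 7).** Let `R₁`, `R₂` be vertex-disjoint induced paths of a
finite simple block graph and let `Q` be an induced path from the first vertex of `R₁`
to the last vertex of `R₂`. Then `Q` decomposes uniquely as `Q₁ * γ * Q₂` where `Q₁`
is a subpath of `R₁`, `Q₂` is a subpath of `R₂`, and `γ` meets each of `R₁`, `R₂` in a
single vertex. -/
theorem blockGraph_inducedPath_between_two_paths_decomposition {V : Type*} [Fintype V]
    [DecidableEq V] {G : SimpleGraph V} (hBG : IsBlockGraph G)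
    (R1 R2 Q : InducedPath G) (hdisj : Disjoint R1.vertexSet R2.vertexSet)
    (hfirst : Q.first = R1.first) (hlast : Q.last = R2.last) :
    ∃ (c d : V) (q1 : G.Walk Q.first c) (g : G.Walk c d) (q2 : G.Walk d Q.last),
      Q.walk = q1.append (g.append q2) ∧
      {v : V | v ∈ q1.support} ⊆ R1.vertexSet ∧
      {e : Sym2 V | e ∈ q1.edges} ⊆ R1.edgeSet ∧
      {v : V | v ∈ q2.support} ⊆ R2.vertexSet ∧
      {e : Sym2 V | e ∈ q2.edges} ⊆ R2.edgeSet ∧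
      {v : V | v ∈ g.support} ∩ R1.vertexSet = {c} ∧
      {v : V | v ∈ g.support} ∩ R2.vertexSet = {d} ∧
      ∀ (c₂ d₂ : V) (q1₂ : G.Walk Q.first c₂) (g₂ : G.Walk c₂ d₂) (q2₂ : G.Walk d₂ Q.last),
        Q.walk = q1₂.append (g₂.append q2₂) →
        {v : V | v ∈ q1₂.support} ⊆ R1.vertexSet →
        {e : Sym2 V | e ∈ q1₂.edges} ⊆ R1.edgeSet →
        {v : V | v ∈ q2₂.support} ⊆ R2.vertexSet →
        {e : Sym2 V | e ∈ q2₂.edges} ⊆ R2.edgeSet →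
        {v : V | v ∈ g₂.support} ∩ R1.vertexSet = {c₂} →
        {v : V | v ∈ g₂.support} ∩ R2.vertexSet = {d₂} →
        c₂ = c ∧ d₂ = d ∧ HEq q1₂ q1 ∧ HEq g₂ g ∧ HEq q2₂ q2 :=
  blockGraph_inducedPath_between_two_paths_decomposition_general hBG R1 R2 Q hdisj hfirst hlast
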